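/- Let U: ℝ^d → ℝ be continuously differentiable with ∇U bounded and Lipschitz continuous, let T > 0, and for ε > 0 let φ_ε denote the density of the normal distribution with mean 0 and variance ε. Define the acceptance factor s_{M2}(i,x,z) := exp((U(x) − U(x + z e_i))₊/T), where a₊ := max{a,0}. Then there exist C > 0 and ε₀ > 0 such that for all 0 < ε < ε₀, all x ∈ ℝ^d and all 1 ≤ i ≤ d: (1/ε) | ∫_ℝ z³ · s_{M2}(i,x,z) φ_ε(z) dz | ≤ C √ε; i.e. the third-moment estimate (1/ε)∫ z³ s_{M2}(i,x,z) φ_ε(z) dz = O(√ε) holds uniformly in x. -/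

import Mathlib

open MeasureTheory

/-- Density of the one-dimensional normal distribution with mean `0` and variance `ε`. -/
noncomputable def gaussDensity (ε z : ℝ) : ℝ :=
  (Real.sqrt (2 * Real.pi * ε))⁻¹ * Real.exp (-z ^ 2 / (2 * ε))

/-!
Since `z ↦ z³ φ_ε(z)` is odd, the integral only sees the odd part of the acceptance factor:
it equals `½ ∫ z³ (s(z) - s(-z)) φ_ε(z) dz`. As `‖∇U‖ ≤ K`, the factor satisfies
`1 ≤ s(z) ≤ exp (c|z|)` with `c = K / T`, hence `|s(z) - s(-z)| ≤ exp (c|z|) - 1 ≤ c|z| exp (c|z|)`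
and the integral is at most `(c/2) ∫ z⁴ exp (c|z|) φ_ε(z) dz`. Both `exp (c|z|)` and `z⁴` are
absorbed by doubling the variance, `φ_ε = √2 φ_{2ε} exp (-z²/(4ε))`, which bounds this by
`128 c exp (εc²) ε²`: after division by `ε` this is `O(ε)`, and `ε ≤ √ε` for `ε ≤ 1`.
-/

open Real ProbabilityTheory

theorem gaussDensity_eq_gaussianPDFReal {ε : ℝ} (hε : 0 ≤ ε) (z : ℝ) :
    gaussDensity ε z = gaussianPDFReal 0 ε.toNNReal z := by
  simp only [gaussianPDFReal_def, sub_zero, Real.coe_toNNReal _ hε, gaussDensity]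

theorem gaussDensity_pos {ε : ℝ} (hε : 0 < ε) (z : ℝ) : 0 < gaussDensity ε z := by
  unfold gaussDensity; positivity

theorem gaussDensity_neg (ε z : ℝ) : gaussDensity ε (-z) = gaussDensity ε z := by
  simp [gaussDensity]

theorem integrable_gaussDensity {ε : ℝ} (hε : 0 ≤ ε) : Integrable (gaussDensity ε) := by
  simpa [funext (gaussDensity_eq_gaussianPDFReal hε)] using integrable_gaussianPDFReal 0 ε.toNNReal

theorem integral_gaussDensity {ε : ℝ} (hε : 0 < ε) : ∫ z, gaussDensity ε z = 1 := by
  simp_rw [gaussDensity_eq_gaussianPDFReal hε.le]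
  exact integral_gaussianPDFReal_eq_one 0 (by simpa using hε)

theorem gaussDensity_eq_sqrt_two_mul {ε : ℝ} (hε : 0 < ε) (z : ℝ) :
    gaussDensity ε z = √2 * gaussDensity (2 * ε) z * exp (-z ^ 2 / (4 * ε)) := by
  have h : √(2 * π * (2 * ε)) = √2 * √(2 * π * ε) := by
    rw [← Real.sqrt_mul zero_le_two]; ring_nf
  have e : exp (-z ^ 2 / (2 * ε)) = exp (-z ^ 2 / (2 * (2 * ε))) * exp (-z ^ 2 / (4 * ε)) := by
    rw [← exp_add]; congr 1; field_simp; ring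
  rw [gaussDensity, gaussDensity, h, e]
  field_simp

theorem exp_mul_abs_mul_exp_neg_sq_le {c ε : ℝ} (hε : 0 < ε) (z : ℝ) :
    exp (c * |z|) * exp (-z ^ 2 / (4 * ε)) ≤ exp (ε * c ^ 2) := by
  rw [← exp_add, exp_le_exp]
  have h : c * |z| ≤ ε * c ^ 2 + z ^ 2 / (4 * ε) := by
    rw [← sq_abs z, ← sub_le_iff_le_add', le_div_iff₀ (by positivity)]
    nlinarith [sq_nonneg (2 * ε * c - |z|)]
  rw [neg_div]
  linarith

theorem pow_four_mul_exp_neg_sq_le {ε : ℝ} (hε : 0 < ε) (z : ℝ) :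
    z ^ 4 * exp (-z ^ 2 / (4 * ε)) ≤ 32 * ε ^ 2 := by
  set t := z ^ 2 / (4 * ε) with ht
  have key : t ^ 2 / 2 ≤ exp t := by
    simpa using pow_div_factorial_le_exp t (by positivity) 2
  have hz : z ^ 4 = 16 * ε ^ 2 * t ^ 2 := by rw [ht]; field_simp; ring
  rw [neg_div, ← ht, hz, exp_neg, ← div_eq_mul_inv, div_le_iff₀ (exp_pos t)]
  nlinarith [sq_nonneg ε]

theorem exp_mul_abs_mul_gaussDensity_le {c ε : ℝ} (hε : 0 < ε) (z : ℝ) :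
    exp (c * |z|) * gaussDensity ε z ≤ √2 * exp (ε * c ^ 2) * gaussDensity (2 * ε) z := by
  rw [gaussDensity_eq_sqrt_two_mul hε]
  calc exp (c * |z|) * (√2 * gaussDensity (2 * ε) z * exp (-z ^ 2 / (4 * ε)))
      = √2 * (exp (c * |z|) * exp (-z ^ 2 / (4 * ε))) * gaussDensity (2 * ε) z := by ring
    _ ≤ √2 * exp (ε * c ^ 2) * gaussDensity (2 * ε) z :=
      mul_le_mul_of_nonneg_right (mul_le_mul_of_nonneg_left (exp_mul_abs_mul_exp_neg_sq_le hε z)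
        (sqrt_nonneg 2)) (gaussDensity_pos (by positivity) z).le

theorem pow_four_mul_gaussDensity_le {ε : ℝ} (hε : 0 < ε) (z : ℝ) :
    z ^ 4 * gaussDensity ε z ≤ 32 * √2 * ε ^ 2 * gaussDensity (2 * ε) z := by
  rw [gaussDensity_eq_sqrt_two_mul hε]
  calc z ^ 4 * (√2 * gaussDensity (2 * ε) z * exp (-z ^ 2 / (4 * ε)))
      = √2 * (z ^ 4 * exp (-z ^ 2 / (4 * ε))) * gaussDensity (2 * ε) z := by ring
    _ ≤ √2 * (32 * ε ^ 2) * gaussDensity (2 * ε) z :=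
      mul_le_mul_of_nonneg_right (mul_le_mul_of_nonneg_left (pow_four_mul_exp_neg_sq_le hε z)
        (sqrt_nonneg 2)) (gaussDensity_pos (by positivity) z).le
    _ = 32 * √2 * ε ^ 2 * gaussDensity (2 * ε) z := by ring

theorem pow_four_mul_exp_mul_abs_mul_gaussDensity_le {c ε : ℝ} (hε : 0 < ε) (z : ℝ) :
    z ^ 4 * (exp (c * |z|) * gaussDensity ε z) ≤
      256 * exp (ε * c ^ 2) * ε ^ 2 * gaussDensity (4 * ε) z := by
  calc z ^ 4 * (exp (c * |z|) * gaussDensity ε z)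
      ≤ z ^ 4 * (√2 * exp (ε * c ^ 2) * gaussDensity (2 * ε) z) := by
        gcongr z ^ 4 * ?_; exact exp_mul_abs_mul_gaussDensity_le hε z
    _ = √2 * exp (ε * c ^ 2) * (z ^ 4 * gaussDensity (2 * ε) z) := by ring
    _ ≤ √2 * exp (ε * c ^ 2) * (32 * √2 * (2 * ε) ^ 2 * gaussDensity (2 * (2 * ε)) z) := by
        gcongr √2 * exp (ε * c ^ 2) * ?_; exact pow_four_mul_gaussDensity_le (by positivity) z
    _ = 256 * exp (ε * c ^ 2) * ε ^ 2 * gaussDensity (4 * ε) z := by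
        rw [show 2 * (2 * ε) = 4 * ε by ring]
        linear_combination 128 * exp (ε * c ^ 2) * ε ^ 2 * gaussDensity (4 * ε) z *
          sq_sqrt zero_le_two

theorem exp_sub_one_le_mul_exp {a : ℝ} : exp a - 1 ≤ a * exp a := by
  have h := mul_le_mul_of_nonneg_right (one_sub_le_exp_neg a) (exp_pos a).le
  rw [← exp_add, neg_add_cancel, exp_zero] at h
  linarith

theorem two_mul_abs_integral_le_of_abs_add_comp_neg_le {f g : ℝ → ℝ} (hf : Integrable f)
    (hg : Integrable g) (h : ∀ z, |f z + f (-z)| ≤ g z) : 2 * |∫ z, f z| ≤ ∫ z, g z :=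
  calc 2 * |∫ z, f z| = |∫ z, f z + f (-z)| := by
        rw [integral_add hf hf.comp_neg, integral_neg_eq_self, ← two_mul, abs_mul, abs_two]
    _ ≤ ∫ z, g z := norm_integral_le_of_norm_le (f := fun z ↦ f z + f (-z)) hg (ae_of_all _ h)

section ThirdMoment

variable {s : ℝ → ℝ} {c ε : ℝ}

theorem abs_sub_comp_neg_le (hs1 : ∀ z, 1 ≤ s z) (hs2 : ∀ z, s z ≤ exp (c * |z|)) (z : ℝ) :
    |s z - s (-z)| ≤ c * |z| * exp (c * |z|) := by
  have h := hs2 (-z)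
  rw [abs_neg] at h
  exact (abs_sub_le_iff.2 ⟨by linarith [hs1 (-z), hs2 z], by linarith [hs1 z]⟩).trans
    exp_sub_one_le_mul_exp

theorem integrable_pow_three_mul_mul_gaussDensity (hs : AEStronglyMeasurable s)
    (hs_le : ∀ z, |s z| ≤ exp (c * |z|)) (hε : 0 < ε) :
    Integrable (fun z ↦ z ^ 3 * s z * gaussDensity ε z) := by
  refine Integrable.mono' (g := fun z ↦ √2 * exp (ε * c ^ 2) * gaussDensity (2 * ε) z +
      256 * exp (ε * c ^ 2) * ε ^ 2 * gaussDensity (4 * ε) z) ?_ ?_ (ae_of_all _ fun z ↦ ?_)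
  · exact ((integrable_gaussDensity (by positivity)).const_mul _).add
      ((integrable_gaussDensity (by positivity)).const_mul _)
  · exact ((continuous_pow 3).aestronglyMeasurable.mul hs).mul
      (integrable_gaussDensity hε.le).aestronglyMeasurable
  have hz : |z| ^ 3 ≤ 1 + z ^ 4 := by
    rcases le_total |z| 1 with h | h
    · nlinarith [pow_le_one₀ (n := 3) (abs_nonneg z) h, sq_nonneg (z ^ 2)]
    · nlinarith [pow_le_pow_right₀ h (show 3 ≤ 4 by norm_num), (by decide : Even 4).pow_abs z]
  have hg := (gaussDensity_pos hε z).le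
  calc ‖z ^ 3 * s z * gaussDensity ε z‖ = |z| ^ 3 * |s z| * gaussDensity ε z := by
        rw [Real.norm_eq_abs, abs_mul, abs_mul, abs_pow, abs_of_nonneg hg]
    _ ≤ (1 + z ^ 4) * exp (c * |z|) * gaussDensity ε z := by gcongr; exact hs_le z
    _ = exp (c * |z|) * gaussDensity ε z + z ^ 4 * (exp (c * |z|) * gaussDensity ε z) := by ring
    _ ≤ _ := add_le_add (exp_mul_abs_mul_gaussDensity_le hε z)
        (pow_four_mul_exp_mul_abs_mul_gaussDensity_le hε z)

theorem abs_integral_pow_three_mul_mul_gaussDensity_le (hs : AEStronglyMeasurable s) (hc : 0 ≤ c)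
    (hs1 : ∀ z, 1 ≤ s z) (hs2 : ∀ z, s z ≤ exp (c * |z|)) (hε : 0 < ε) :
    |∫ z, z ^ 3 * s z * gaussDensity ε z| ≤ 128 * c * exp (ε * c ^ 2) * ε ^ 2 := by
  have hs_le z : |s z| ≤ exp (c * |z|) := by
    rw [abs_of_nonneg (zero_le_one.trans (hs1 z))]; exact hs2 z
  have key := two_mul_abs_integral_le_of_abs_add_comp_neg_le
    (integrable_pow_three_mul_mul_gaussDensity hs hs_le hε)
    (((integrable_gaussDensity (ε := 4 * ε) (by positivity)).const_mul
      (256 * exp (ε * c ^ 2) * ε ^ 2)).const_mul c)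
    fun z ↦ ?_
  · have h4 : ∫ z, gaussDensity (4 * ε) z = 1 := integral_gaussDensity (by positivity)
    rw [integral_const_mul, integral_const_mul, h4] at key
    linarith
  have hg := (gaussDensity_pos hε z).le
  calc |z ^ 3 * s z * gaussDensity ε z + (-z) ^ 3 * s (-z) * gaussDensity ε (-z)|
      = |z| ^ 3 * |s z - s (-z)| * gaussDensity ε z := by
        rw [gaussDensity_neg, show z ^ 3 * s z * gaussDensity ε z + (-z) ^ 3 * s (-z) *
          gaussDensity ε z = z ^ 3 * (s z - s (-z)) * gaussDensity ε z by ring,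
          abs_mul, abs_mul, abs_pow, abs_of_nonneg hg]
    _ ≤ |z| ^ 3 * (c * |z| * exp (c * |z|)) * gaussDensity ε z := by
        gcongr; exact abs_sub_comp_neg_le hs1 hs2 z
    _ = c * (z ^ 4 * (exp (c * |z|) * gaussDensity ε z)) := by
        rw [← (by decide : Even 4).pow_abs z]; ring
    _ ≤ c * (256 * exp (ε * c ^ 2) * ε ^ 2 * gaussDensity (4 * ε) z) := by
        gcongr c * ?_; exact pow_four_mul_exp_mul_abs_mul_gaussDensity_le hε z

end ThirdMoment

section Acceptance

variable {d : ℕ} {T K : ℝ} {U : EuclideanSpace ℝ (Fin d) → ℝ} {x : EuclideanSpace ℝ (Fin d)}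
  {i : Fin d}

/-- The acceptance factor `s_{M2}(i, x, z)` of the second Metropolis-Hastings process. -/
noncomputable def mh2Acceptance (T : ℝ) (U : EuclideanSpace ℝ (Fin d) → ℝ)
    (x : EuclideanSpace ℝ (Fin d)) (i : Fin d) (z : ℝ) : ℝ :=
  exp (max (U x - U (x + z • EuclideanSpace.single i (1 : ℝ))) 0 / T)

theorem continuous_mh2Acceptance (hU : Continuous U) : Continuous (mh2Acceptance T U x i) := by
  unfold mh2Acceptance; fun_prop

theorem one_le_mh2Acceptance (hT : 0 ≤ T) (z : ℝ) : 1 ≤ mh2Acceptance T U x i z :=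
  one_le_exp (div_nonneg (le_max_right _ _) hT)

theorem mh2Acceptance_le (hT : 0 ≤ T) (hU : Differentiable ℝ U)
    (hbd : ∀ x, ‖fderiv ℝ U x‖ ≤ K) (z : ℝ) :
    mh2Acceptance T U x i z ≤ exp (K / T * |z|) := by
  have hmvt := convex_univ.norm_image_sub_le_of_norm_fderiv_le (fun y _ ↦ hU y) (fun y _ ↦ hbd y)
    (Set.mem_univ (x + z • EuclideanSpace.single i (1 : ℝ))) (Set.mem_univ x)
  rw [sub_add_cancel_left, norm_neg, norm_smul, PiLp.norm_single, norm_one, mul_one,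
    Real.norm_eq_abs, Real.norm_eq_abs] at hmvt
  have hK : 0 ≤ K := (norm_nonneg _).trans (hbd x)
  rw [mh2Acceptance, exp_le_exp, div_mul_eq_mul_div]
  gcongr
  exact max_le ((le_abs_self _).trans hmvt) (by positivity)

end Acceptance

theorem mh2_third_moment_estimate_general {d : ℕ} (T : ℝ) (hT : 0 < T)
    (U : EuclideanSpace ℝ (Fin d) → ℝ) (hU : ContDiff ℝ 1 U)
    (K : ℝ) (hbd : ∀ x, ‖fderiv ℝ U x‖ ≤ K) :
    ∃ C > (0:ℝ), ∃ ε₀ > (0:ℝ), ∀ ε : ℝ, 0 < ε → ε < ε₀ →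
      ∀ (x : EuclideanSpace ℝ (Fin d)) (i : Fin d),
        (1 / ε) * |∫ z : ℝ,
              z ^ 3 * Real.exp (max (U x - U (x + z • EuclideanSpace.single i (1:ℝ))) 0 / T) *
                gaussDensity ε z|
          ≤ C * Real.sqrt ε := by
  set c := K / T
  have hc : 0 ≤ c := div_nonneg ((norm_nonneg _).trans (hbd 0)) hT.le
  refine ⟨128 * c * exp (c ^ 2) + 1, by positivity, 1, one_pos, fun ε hε hε1 x i ↦ ?_⟩
  have hmoment := abs_integral_pow_three_mul_mul_gaussDensity_le (s := mh2Acceptance T U x i)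
    (continuous_mh2Acceptance hU.continuous).aestronglyMeasurable hc (one_le_mh2Acceptance hT.le)
    (mh2Acceptance_le hT.le (hU.differentiable one_ne_zero) hbd) hε
  calc (1 / ε) * |∫ z, z ^ 3 * mh2Acceptance T U x i z * gaussDensity ε z|
      ≤ (1 / ε) * (128 * c * exp (ε * c ^ 2) * ε ^ 2) := by gcongr
    _ = 128 * c * exp (ε * c ^ 2) * ε := by field_simp
    _ ≤ 128 * c * exp (c ^ 2) * √ε := by
        gcongr
        · nlinarith [sq_nonneg c]
        · exact Real.le_sqrt_self_iff.2 hε1.le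
    _ ≤ (128 * c * exp (c ^ 2) + 1) * √ε := by gcongr; linarith

/-- Third-moment estimate for the second Metropolis-Hastings process: uniformly in `x` and `i`,
`(1/ε)∫ z³·s_{M2}(i,x,z) φ_ε(z) dz = O(√ε)`. -/
theorem mh2_third_moment_estimate {d : ℕ} (T : ℝ) (hT : 0 < T)
    (U : EuclideanSpace ℝ (Fin d) → ℝ) (hU : ContDiff ℝ 1 U)
    (K : ℝ) (hbd : ∀ x, ‖fderiv ℝ U x‖ ≤ K)
    (L : NNReal) (hlip : LipschitzWith L (fderiv ℝ U)) :
    ∃ C > (0:ℝ), ∃ ε₀ > (0:ℝ), ∀ ε : ℝ, 0 < ε → ε < ε₀ →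
      ∀ (x : EuclideanSpace ℝ (Fin d)) (i : Fin d),
        (1 / ε) * |∫ z : ℝ,
              z ^ 3 * Real.exp (max (U x - U (x + z • EuclideanSpace.single i (1:ℝ))) 0 / T) *
                gaussDensity ε z|
          ≤ C * Real.sqrt ε :=
  mh2_third_moment_estimate_general T hT U hU K hbd
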